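/- Let m ∈ ℕ and let (a_{j,l,k}), indexed by triples (j,l,k) ∈ ℕ³ with j − l + k = m, be any family of complex numbers satisfying a_{j,l,k} = a_{k,l,j} and sup |a_{j,l,k}| ≤ 1/2. Define, for a sequence v, the sequence X(v) with n-th entry X(v)(n) = −2i·Σ over (k,l) ∈ ℕ² with k − l + n = m of conj(a_{k,l,n})·conj(v_k)·v_l − i·Σ over (k,l) ∈ ℕ² with k + l = m + n of a_{k,n,l}·v_k·v_l. Then for every s > 1/2 there exists a constant C_{m,s} > 0 such that for all v, h ∈ H^s₊: ‖X(v)‖_{H^s} ≤ C_{m,s}‖v‖_{H^s}², and ‖X(v) − X(h)‖_{H^s} ≤ C_{m,s}(‖v‖_{H^s} + ‖h‖_{H^s})·‖v − h‖_{H^s}. -/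

import Mathlib

/-- Squared `H^s` norm of a sequence of Fourier coefficients. -/
noncomputable def hsNormSq (s : ℝ) (v : ℕ → ℂ) : ℝ :=
  ∑' k : ℕ, (1 + (k : ℝ) ^ 2) ^ s * ‖v k‖ ^ 2

/-- `H^s` norm of a sequence of Fourier coefficients. -/
noncomputable def hsNorm (s : ℝ) (v : ℕ → ℂ) : ℝ :=
  Real.sqrt (hsNormSq s v)

/-- Membership in `H^s₊`. -/
def InHs (s : ℝ) (v : ℕ → ℂ) : Prop :=
  Summable fun k : ℕ => (1 + (k : ℝ) ^ 2) ^ s * ‖v k‖ ^ 2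

/-- The `k`-th Fourier coefficient of `Π(|v|²v)`:
the sum over `k₁ - k₂ + k₃ = k` of `v_{k₁} * conj v_{k₂} * v_{k₃}`. -/
noncomputable def cubicTerm (v : ℕ → ℂ) (k : ℕ) : ℂ :=
  ∑' p : ℕ × ℕ × ℕ,
    if p.1 + p.2.2 = k + p.2.1 then v p.1 * (starRingEnd ℂ) (v p.2.1) * v p.2.2 else 0

/-- Absolute convergence of the sum defining `cubicTerm v k`. -/
def CubicSummable (v : ℕ → ℂ) (k : ℕ) : Prop :=
  Summable fun p : ℕ × ℕ × ℕ =>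
    ‖if p.1 + p.2.2 = k + p.2.1 then v p.1 * (starRingEnd ℂ) (v p.2.1) * v p.2.2 else 0‖

/-- Continuity of `t ↦ u(t)` as a curve with values in `H^s₊`. -/
def HsContinuous (s : ℝ) (u : ℝ → ℕ → ℂ) : Prop :=
  ∀ t₀ : ℝ, ∀ δ : ℝ, 0 < δ → ∃ η > 0, ∀ t : ℝ, |t - t₀| < η →
    hsNorm s (fun k => u t k - u t₀ k) < δ

/-- `u ∈ C(ℝ, H^s₊)` is a solution of the NLS–Szegő equation
`i ∂ₜ u + ε^α ∂ₓ² u = Π(|u|²u)`, written on Fourier coefficients. -/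
def IsSolutionNLSSzego (s ε α : ℝ) (u : ℝ → ℕ → ℂ) : Prop :=
  (∀ t : ℝ, InHs s (u t)) ∧ HsContinuous s u ∧
  ∀ t : ℝ, ∀ k : ℕ, CubicSummable (u t) k ∧
    HasDerivAt (fun τ : ℝ => u τ k)
      (-Complex.I * (((ε ^ α * (k : ℝ) ^ 2 : ℝ) : ℂ) * u t k + cubicTerm (u t) k)) t

/-- The Hamiltonian vector field of the cubic functional
`F_m(v) = Σ_{j-l+k=m} Re(a_{j,l,k} v_j conj(v_l) v_k)`:
`X(v)(n) = -2i Σ_{k-l+n=m} conj(a_{k,l,n}) conj(v_k) v_l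
           - i Σ_{k+l=m+n} a_{k,n,l} v_k v_l`. -/
noncomputable def Xa (m : ℕ) (a : ℕ → ℕ → ℕ → ℂ) (v : ℕ → ℂ) : ℕ → ℂ := fun n =>
  (-2) * Complex.I *
    (∑' p : ℕ × ℕ, if p.1 + n = p.2 + m then
      (starRingEnd ℂ) (a p.1 p.2 n) * (starRingEnd ℂ) (v p.1) * v p.2 else 0)
  - Complex.I *
    (∑' p : ℕ × ℕ, if p.1 + p.2 = m + n then a p.1 n p.2 * v p.1 * v p.2 else 0)

/-! The difference `X(v) - X(h)` is bounded coefficientwise by `|v - h| ⋆ |v| + |h| ⋆ |v - h|`,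
where `⋆` is the bilinear form whose kernel encodes the two resonance conditions; each of its
fibres has at most two points. With `⟨k⟩ = (1 + k²)^(1/2)`, on the support of the kernel
`⟨n⟩^s ≲ ⟨k⟩^s + ⟨l⟩^s`, so the `H^s` weight can be moved onto one factor, and Young's
inequality `ℓ¹ ⋆ ℓ² ⊆ ℓ²` together with the embedding `H^s ⊆ ℓ¹` (Cauchy–Schwarz against
`∑ ⟨k⟩^(-2s) < ∞`, i.e. `s > 1/2`) gives the Lipschitz bound; the quadratic bound is its case
`h = 0`. The estimates are carried out in `ℝ≥0∞`, where sums need no summability side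
conditions. -/

open scoped ENNReal NNReal ComplexConjugate

namespace ENNReal

theorem two_mul_le_add_sq (a b : ℝ≥0∞) : 2 * a * b ≤ a ^ 2 + b ^ 2 := by
  induction a using ENNReal.recTopCoe <;> induction b using ENNReal.recTopCoe
  all_goals try simp [ENNReal.top_pow, ENNReal.mul_top]
  exact_mod_cast _root_.two_mul_le_add_sq (_ : ℝ≥0) _

theorem add_sq_le (a b : ℝ≥0∞) : (a + b) ^ 2 ≤ 2 * (a ^ 2 + b ^ 2) :=
  calc (a + b) ^ 2 = a ^ 2 + b ^ 2 + 2 * a * b := by ring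
    _ ≤ a ^ 2 + b ^ 2 + (a ^ 2 + b ^ 2) := by gcongr; exact two_mul_le_add_sq a b
    _ = 2 * (a ^ 2 + b ^ 2) := by ring

theorem tsum_mul_tsum {α β : Type*} (f : α → ℝ≥0∞) (g : β → ℝ≥0∞) :
    (∑' i, f i) * ∑' j, g j = ∑' p : α × β, f p.1 * g p.2 := by
  rw [ENNReal.tsum_prod', ← ENNReal.tsum_mul_right]
  exact tsum_congr fun i => ENNReal.tsum_mul_left.symm

theorem sq_tsum_mul_le {ι : Type*} (μ g : ι → ℝ≥0∞) :
    (∑' i, μ i * g i) ^ 2 ≤ (∑' i, μ i) * ∑' i, μ i * g i ^ 2 := by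
  have h2 : 2 * (∑' i, μ i * g i) ^ 2 ≤ 2 * ((∑' i, μ i) * ∑' i, μ i * g i ^ 2) :=
    calc 2 * (∑' i, μ i * g i) ^ 2
        = ∑' p : ι × ι, μ p.1 * μ p.2 * (2 * g p.1 * g p.2) := by
          rw [sq, tsum_mul_tsum, ← ENNReal.tsum_mul_left]
          exact tsum_congr fun p => by ring
      _ ≤ ∑' p : ι × ι, μ p.1 * μ p.2 * (g p.1 ^ 2 + g p.2 ^ 2) := by
          gcongr; exact two_mul_le_add_sq _ _
      _ = ∑' p : ι × ι, μ p.1 * g p.1 ^ 2 * μ p.2 + ∑' p : ι × ι, μ p.1 * (μ p.2 * g p.2 ^ 2) := by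
          rw [← ENNReal.tsum_add]
          exact tsum_congr fun p => by ring
      _ = 2 * ((∑' i, μ i) * ∑' i, μ i * g i ^ 2) := by
          rw [← tsum_mul_tsum (fun i => μ i * g i ^ 2) μ,
            ← tsum_mul_tsum μ (fun i => μ i * g i ^ 2)]
          ring
  exact (ENNReal.mul_le_mul_iff_right two_ne_zero ofNat_ne_top).1 h2

end ENNReal

section KernelBilin

variable {α β γ : Type*}

noncomputable def kernelBilin (χ : α × β → γ → ℝ≥0∞) (c : α → ℝ≥0∞) (d : β → ℝ≥0∞) (n : γ) :
    ℝ≥0∞ :=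
  ∑' p : α × β, χ p n * (c p.1 * d p.2)

theorem tsum_kernelBilin_sq_le {A : ℝ≥0∞} (χ : α × β → γ → ℝ≥0∞)
    (hγ : ∀ p, ∑' n, χ p n ≤ A) (hβ : ∀ x n, ∑' y, χ (x, y) n ≤ A) (c : α → ℝ≥0∞)
    (d : β → ℝ≥0∞) :
    ∑' n, kernelBilin χ c d n ^ 2 ≤ A ^ 2 * (∑' x, c x) ^ 2 * ∑' y, d y ^ 2 := by
  have hrow : ∀ n, ∑' p : α × β, χ p n * c p.1 ≤ A * ∑' x, c x := fun n =>
    calc ∑' p : α × β, χ p n * c p.1 = ∑' x, c x * ∑' y, χ (x, y) n := by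
          rw [ENNReal.tsum_prod']
          refine tsum_congr fun x => ?_
          rw [← ENNReal.tsum_mul_left]
          exact tsum_congr fun y => mul_comm _ _
      _ ≤ ∑' x, c x * A := by gcongr with x; exact hβ x n
      _ = A * ∑' x, c x := by rw [ENNReal.tsum_mul_right, mul_comm]
  calc ∑' n, kernelBilin χ c d n ^ 2
      ≤ ∑' n, (∑' p : α × β, χ p n * c p.1) * ∑' p : α × β, χ p n * c p.1 * d p.2 ^ 2 := by
        gcongr with n
        simpa only [kernelBilin, mul_assoc] using
          ENNReal.sq_tsum_mul_le (fun p => χ p n * c p.1) (fun p => d p.2)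
    _ ≤ ∑' n, A * (∑' x, c x) * ∑' p : α × β, χ p n * c p.1 * d p.2 ^ 2 := by
        gcongr with n
        exact hrow n
    _ = A * (∑' x, c x) * ∑' p : α × β, c p.1 * d p.2 ^ 2 * ∑' n, χ p n := by
        rw [ENNReal.tsum_mul_left, ENNReal.tsum_comm]
        congr 1
        refine tsum_congr fun p => ?_
        rw [← ENNReal.tsum_mul_left]
        exact tsum_congr fun n => by ring
    _ ≤ A * (∑' x, c x) * ∑' p : α × β, c p.1 * d p.2 ^ 2 * A := by
        gcongr with p
        exact hγ p
    _ = A ^ 2 * (∑' x, c x) ^ 2 * ∑' y, d y ^ 2 := by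
        rw [ENNReal.tsum_mul_right, ← ENNReal.tsum_mul_tsum c fun y => d y ^ 2]
        ring

theorem tsum_kernelBilin_sq_le' {A : ℝ≥0∞} (χ : α × β → γ → ℝ≥0∞)
    (hγ : ∀ p, ∑' n, χ p n ≤ A) (hα : ∀ y n, ∑' x, χ (x, y) n ≤ A) (c : α → ℝ≥0∞)
    (d : β → ℝ≥0∞) :
    ∑' n, kernelBilin χ c d n ^ 2 ≤ A ^ 2 * (∑' y, d y) ^ 2 * ∑' x, c x ^ 2 := by
  have hswap : ∀ n, kernelBilin χ c d n = kernelBilin (fun q n => χ q.swap n) d c n := fun n =>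
    ((Equiv.prodComm β α).tsum_eq fun p => χ p n * (c p.1 * d p.2)).symm.trans
      (tsum_congr fun q => by simp only [Equiv.prodComm_apply, Prod.fst_swap, Prod.snd_swap,
        mul_comm (c _)])
  simp_rw [hswap]
  exact tsum_kernelBilin_sq_le _ (fun q => hγ q.swap) hα d c

end KernelBilin

section WeightedKernelBilin

variable {ι : Type*} {w : ι → ℝ≥0∞}

theorem sq_tsum_le_tsum_inv_sq_mul (hw₀ : ∀ i, w i ≠ 0) (hw : ∀ i, w i ≠ ⊤) (c : ι → ℝ≥0∞) :
    (∑' i, c i) ^ 2 ≤ (∑' i, (w i)⁻¹ ^ 2) * ∑' i, (w i * c i) ^ 2 := by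
  have hinv : ∀ i, (w i)⁻¹ ^ 2 * w i ^ 2 = 1 := fun i => by
    rw [← mul_pow, ENNReal.inv_mul_cancel (hw₀ i) (hw i), one_pow]
  calc (∑' i, c i) ^ 2 = (∑' i, (w i)⁻¹ ^ 2 * (w i ^ 2 * c i)) ^ 2 := by
        simp only [← mul_assoc, hinv, one_mul]
    _ ≤ (∑' i, (w i)⁻¹ ^ 2) * ∑' i, (w i)⁻¹ ^ 2 * (w i ^ 2 * c i) ^ 2 :=
        ENNReal.sq_tsum_mul_le _ _
    _ = (∑' i, (w i)⁻¹ ^ 2) * ∑' i, (w i * c i) ^ 2 := by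
        congr 1
        refine tsum_congr fun i => ?_
        calc (w i)⁻¹ ^ 2 * (w i ^ 2 * c i) ^ 2 = (w i)⁻¹ ^ 2 * w i ^ 2 * (w i * c i) ^ 2 := by
              ring
          _ = (w i * c i) ^ 2 := by rw [hinv, one_mul]

theorem tsum_sq_weight_mul_kernelBilin_le (hw₀ : ∀ i, w i ≠ 0) (hw : ∀ i, w i ≠ ⊤)
    {K A : ℝ≥0∞} (χ : ι × ι → ι → ℝ≥0∞) (hK : ∀ p n, χ p n ≠ 0 → w n ≤ K * (w p.1 + w p.2))
    (hγ : ∀ p, ∑' n, χ p n ≤ A) (hβ : ∀ x n, ∑' y, χ (x, y) n ≤ A)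
    (hα : ∀ y n, ∑' x, χ (x, y) n ≤ A) (c d : ι → ℝ≥0∞) :
    ∑' n, (w n * kernelBilin χ c d n) ^ 2 ≤
      4 * K ^ 2 * A ^ 2 * (∑' i, (w i)⁻¹ ^ 2) * (∑' i, (w i * c i) ^ 2) *
        ∑' i, (w i * d i) ^ 2 := by
  set wc : ι → ℝ≥0∞ := fun i => w i * c i
  set wd : ι → ℝ≥0∞ := fun i => w i * d i
  have hpt : ∀ n, w n * kernelBilin χ c d n ≤
      K * (kernelBilin χ wc d n + kernelBilin χ c wd n) := fun n => by
    simp only [kernelBilin]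
    rw [← ENNReal.tsum_mul_left, ← ENNReal.tsum_add, ← ENNReal.tsum_mul_left]
    refine ENNReal.tsum_le_tsum fun p => ?_
    by_cases h : χ p n = 0
    · simp [h]
    · calc w n * (χ p n * (c p.1 * d p.2))
          ≤ K * (w p.1 + w p.2) * (χ p n * (c p.1 * d p.2)) := by gcongr; exact hK p n h
        _ = K * (χ p n * (wc p.1 * d p.2) + χ p n * (c p.1 * wd p.2)) := by ring
  calc ∑' n, (w n * kernelBilin χ c d n) ^ 2
      ≤ ∑' n, (K * (kernelBilin χ wc d n + kernelBilin χ c wd n)) ^ 2 :=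
        ENNReal.tsum_le_tsum fun n => pow_le_pow_left' (hpt n) 2
    _ ≤ ∑' n, K ^ 2 * (2 * (kernelBilin χ wc d n ^ 2 + kernelBilin χ c wd n ^ 2)) := by
        gcongr with n
        rw [mul_pow]
        gcongr
        exact ENNReal.add_sq_le _ _
    _ = 2 * K ^ 2 * (∑' n, kernelBilin χ wc d n ^ 2 + ∑' n, kernelBilin χ c wd n ^ 2) := by
        rw [← ENNReal.tsum_add, ← ENNReal.tsum_mul_left]
        exact tsum_congr fun n => by ring
    _ ≤ 2 * K ^ 2 * (A ^ 2 * (∑' i, d i) ^ 2 * ∑' i, wc i ^ 2 +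
          A ^ 2 * (∑' i, c i) ^ 2 * ∑' i, wd i ^ 2) := by
        gcongr
        · exact tsum_kernelBilin_sq_le' χ hγ hα wc d
        · exact tsum_kernelBilin_sq_le χ hγ hβ c wd
    _ ≤ 2 * K ^ 2 * (A ^ 2 * ((∑' i, (w i)⁻¹ ^ 2) * ∑' i, wd i ^ 2) * ∑' i, wc i ^ 2 +
          A ^ 2 * ((∑' i, (w i)⁻¹ ^ 2) * ∑' i, wc i ^ 2) * ∑' i, wd i ^ 2) := by
        gcongr
        · exact sq_tsum_le_tsum_inv_sq_mul hw₀ hw d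
        · exact sq_tsum_le_tsum_inv_sq_mul hw₀ hw c
    _ = _ := by ring

end WeightedKernelBilin

noncomputable def hsWeight (s : ℝ) (k : ℕ) : ℝ≥0∞ :=
  ENNReal.ofReal ((1 + (k : ℝ) ^ 2) ^ (s / 2))

/-- `hsNormSq` computed in `ℝ≥0∞`: it is `∞` rather than the junk value `0` off `H^s₊`. -/
noncomputable def hsENormSq (s : ℝ) (u : ℕ → ℂ) : ℝ≥0∞ :=
  ∑' k, (hsWeight s k * ‖u k‖ₑ) ^ 2

section Hs

variable {s : ℝ}

lemma hsWeight_ne_zero (s : ℝ) (k : ℕ) : hsWeight s k ≠ 0 := by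
  rw [hsWeight, ne_eq, ENNReal.ofReal_eq_zero, not_le]
  positivity

lemma hsWeight_ne_top (s : ℝ) (k : ℕ) : hsWeight s k ≠ ⊤ := ENNReal.ofReal_ne_top

lemma hsWeight_mul_enorm_sq (s : ℝ) (k : ℕ) (z : ℂ) :
    (hsWeight s k * ‖z‖ₑ) ^ 2 = ENNReal.ofReal ((1 + (k : ℝ) ^ 2) ^ s * ‖z‖ ^ 2) := by
  rw [hsWeight, ← ofReal_norm, ← ENNReal.ofReal_mul (by positivity),
    ← ENNReal.ofReal_pow (by positivity), mul_pow, ← Real.rpow_mul_natCast (by positivity)]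
  norm_num

lemma hsNormSq_eq_toReal (s : ℝ) (u : ℕ → ℂ) : hsNormSq s u = (hsENormSq s u).toReal := by
  simp only [hsENormSq, hsWeight_mul_enorm_sq]
  rw [ENNReal.tsum_toReal_eq fun _ => ENNReal.ofReal_ne_top, hsNormSq]
  exact tsum_congr fun k => (ENNReal.toReal_ofReal (by positivity)).symm

lemma inHs_iff_hsENormSq_ne_top {u : ℕ → ℂ} : InHs s u ↔ hsENormSq s u ≠ ⊤ := by
  simp only [hsENormSq, hsWeight_mul_enorm_sq]
  refine ⟨fun hu => ?_, fun hu => ?_⟩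
  · rw [← ENNReal.ofReal_tsum_of_nonneg (fun _ => by positivity) hu]
    exact ENNReal.ofReal_ne_top
  · exact (ENNReal.summable_toReal hu).congr fun k => ENNReal.toReal_ofReal (by positivity)

lemma hsNormSq_nonneg (s : ℝ) (u : ℕ → ℂ) : 0 ≤ hsNormSq s u := by
  rw [hsNormSq_eq_toReal]
  exact ENNReal.toReal_nonneg

lemma hsNorm_sq (s : ℝ) (u : ℕ → ℂ) : hsNorm s u ^ 2 = hsNormSq s u :=
  Real.sq_sqrt (hsNormSq_nonneg s u)

lemma hsNorm_nonneg (s : ℝ) (u : ℕ → ℂ) : 0 ≤ hsNorm s u := Real.sqrt_nonneg _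

lemma hsNorm_zero (s : ℝ) : hsNorm s 0 = 0 := by simp [hsNorm, hsNormSq]

lemma inHs_zero (s : ℝ) : InHs s 0 := by simp [inHs_iff_hsENormSq_ne_top, hsENormSq]

lemma hsENormSq_sub_le (u v : ℕ → ℂ) :
    hsENormSq s (u - v) ≤ 2 * (hsENormSq s u + hsENormSq s v) := by
  rw [hsENormSq, hsENormSq, hsENormSq, ← ENNReal.tsum_add, ← ENNReal.tsum_mul_left]
  refine ENNReal.tsum_le_tsum fun k => ?_
  calc (hsWeight s k * ‖(u - v) k‖ₑ) ^ 2
      ≤ (hsWeight s k * ‖u k‖ₑ + hsWeight s k * ‖v k‖ₑ) ^ 2 := by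
        rw [← mul_add]
        gcongr
        exact enorm_sub_le
    _ ≤ 2 * ((hsWeight s k * ‖u k‖ₑ) ^ 2 + (hsWeight s k * ‖v k‖ₑ) ^ 2) :=
        ENNReal.add_sq_le _ _

lemma InHs.sub {u v : ℕ → ℂ} (hu : InHs s u) (hv : InHs s v) : InHs s (u - v) := by
  rw [inHs_iff_hsENormSq_ne_top] at *
  exact ne_top_of_le_ne_top (by finiteness) (hsENormSq_sub_le u v)

lemma hsWeight_le_mul_add (hs : 0 ≤ s) {m n x y : ℕ} (h : n ≤ x + y + m) :
    hsWeight s n ≤ ENNReal.ofReal ((8 + 2 * (m : ℝ) ^ 2) ^ (s / 2)) *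
      (hsWeight s x + hsWeight s y) := by
  have hmax : hsWeight s (max x y) ≤ hsWeight s x + hsWeight s y := by
    rcases max_choice x y with hxy | hxy <;> rw [hxy]
    exacts [le_self_add, le_add_self]
  have hn : (n : ℝ) ≤ 2 * (max x y : ℕ) + m := by exact_mod_cast (by omega : n ≤ 2 * max x y + m)
  have hreal : 1 + (n : ℝ) ^ 2 ≤ (8 + 2 * (m : ℝ) ^ 2) * (1 + ((max x y : ℕ) : ℝ) ^ 2) := by
    have h0 : (0 : ℝ) ≤ n := n.cast_nonneg
    nlinarith [sq_nonneg (2 * ((max x y : ℕ) : ℝ) - m), mul_self_le_mul_self h0 hn,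
      sq_nonneg ((m : ℝ) * (max x y : ℕ))]
  calc hsWeight s n
      ≤ ENNReal.ofReal (((8 + 2 * (m : ℝ) ^ 2) * (1 + ((max x y : ℕ) : ℝ) ^ 2)) ^ (s / 2)) :=
        ENNReal.ofReal_le_ofReal (Real.rpow_le_rpow (by positivity) hreal (by linarith))
    _ = ENNReal.ofReal ((8 + 2 * (m : ℝ) ^ 2) ^ (s / 2)) * hsWeight s (max x y) := by
        rw [Real.mul_rpow (by positivity) (by positivity), ENNReal.ofReal_mul (by positivity),
          hsWeight]
    _ ≤ _ := by gcongr

lemma tsum_inv_hsWeight_sq_ne_top (hs : 1 / 2 < s) : ∑' k, (hsWeight s k)⁻¹ ^ 2 ≠ ⊤ := by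
  have hterm : ∀ k : ℕ, (hsWeight s k)⁻¹ ^ 2 = ENNReal.ofReal ((1 + (k : ℝ) ^ 2) ^ (-s)) := by
    intro k
    rw [hsWeight, ← ENNReal.ofReal_inv_of_pos (by positivity), ← ENNReal.ofReal_pow (by positivity),
      ← Real.rpow_neg (by positivity), ← Real.rpow_mul_natCast (by positivity)]
    ring_nf
  have hsum : Summable fun k : ℕ => (1 + (k : ℝ) ^ 2) ^ (-s) := by
    refine (((Real.summable_one_div_nat_add_rpow 1 (2 * s)).2 (by linarith)).mul_left
      (2 ^ s)).of_nonneg_of_le (fun k => by positivity) fun k => ?_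
    have := rpow_neg_one_add_norm_sq_le (k : ℝ) (r := 2 * s) (by linarith)
    rw [Real.norm_natCast] at this
    convert this using 2
    · ring_nf
    · ring_nf
    · rw [Real.rpow_neg (by positivity), one_div, abs_of_nonneg (by positivity), add_comm]
  rw [tsum_congr hterm, ← ENNReal.ofReal_tsum_of_nonneg (fun _ => by positivity) hsum]
  exact ENNReal.ofReal_ne_top

lemma tsum_enorm_ne_top_of_inHs (hs : 1 / 2 < s) {u : ℕ → ℂ} (hu : InHs s u) :
    ∑' k, ‖u k‖ₑ ≠ ⊤ := by
  have hsq : (∑' k, ‖u k‖ₑ) ^ 2 ≠ ⊤ :=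
    ne_top_of_le_ne_top (ENNReal.mul_ne_top (tsum_inv_hsWeight_sq_ne_top hs)
      (inHs_iff_hsENormSq_ne_top.1 hu))
      (sq_tsum_le_tsum_inv_sq_mul (hsWeight_ne_zero s) (hsWeight_ne_top s) _)
  exact fun h => hsq (by simp [h])

theorem inHs_and_hsNorm_le_of_hsENormSq_le {C : ℝ≥0∞} (hC : C ≠ ⊤) {x u v d : ℕ → ℂ}
    (hu : InHs s u) (hv : InHs s v) (hd : InHs s d)
    (H : hsENormSq s x ≤ C * (hsENormSq s u + hsENormSq s v) * hsENormSq s d) :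
    InHs s x ∧ hsNorm s x ≤ √C.toReal * (hsNorm s u + hsNorm s v) * hsNorm s d := by
  rw [inHs_iff_hsENormSq_ne_top] at hu hv hd ⊢
  refine ⟨ne_top_of_le_ne_top (by finiteness) H, ?_⟩
  have H' : hsNormSq s x ≤ C.toReal * (hsNormSq s u + hsNormSq s v) * hsNormSq s d := by
    simp only [hsNormSq_eq_toReal]
    rw [← ENNReal.toReal_add hu hv, ← ENNReal.toReal_mul, ← ENNReal.toReal_mul]
    exact ENNReal.toReal_mono (by finiteness) H
  have hsum : hsNormSq s u + hsNormSq s v ≤ (hsNorm s u + hsNorm s v) ^ 2 := by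
    rw [← hsNorm_sq, ← hsNorm_sq]
    nlinarith [hsNorm_nonneg s u, hsNorm_nonneg s v]
  refine Real.sqrt_le_iff.2 ⟨?_, H'.trans ?_⟩
  · have := hsNorm_nonneg s u; have := hsNorm_nonneg s v; have := hsNorm_nonneg s d
    positivity
  · rw [mul_pow, mul_pow, Real.sq_sqrt ENNReal.toReal_nonneg, hsNorm_sq]
    have := hsNormSq_nonneg s d
    gcongr

end Hs

lemma tsum_ite_le_one {ι : Type*} {P : ι → Prop} [DecidablePred P]
    (hP : ∀ i j, P i → P j → i = j) : ∑' i, (if P i then 1 else 0 : ℝ≥0∞) ≤ 1 := by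
  by_cases h : ∃ i, P i
  · obtain ⟨i, hi⟩ := h
    rw [tsum_eq_single i fun j hj => if_neg fun hj' => hj (hP j i hj' hi), if_pos hi]
  · simp_all

lemma tsum_ite_add_ite_le_two {ι : Type*} {P Q : ι → Prop} [DecidablePred P] [DecidablePred Q]
    (hP : ∀ i j, P i → P j → i = j) (hQ : ∀ i j, Q i → Q j → i = j) :
    ∑' i, ((if P i then 1 else 0) + if Q i then 1 else 0 : ℝ≥0∞) ≤ 2 := by
  rw [ENNReal.tsum_add, ← one_add_one_eq_two]
  exact add_le_add (tsum_ite_le_one hP) (tsum_ite_le_one hQ)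

/-- The resonance conditions `k - l + n = m` and `k + l = m + n` of the two sums in `Xa`,
with `p = (k, l)`. -/
noncomputable def resonantKernel (m : ℕ) (p : ℕ × ℕ) (n : ℕ) : ℝ≥0∞ :=
  (if p.1 + n = p.2 + m then 1 else 0) + if p.1 + p.2 = m + n then 1 else 0

section ResonantKernel

variable (m : ℕ)

lemma tsum_resonantKernel_le (p : ℕ × ℕ) : ∑' n, resonantKernel m p n ≤ 2 :=
  tsum_ite_add_ite_le_two (fun _ _ _ _ => by omega) (fun _ _ _ _ => by omega)

lemma tsum_resonantKernel_snd_le (x n : ℕ) : ∑' y, resonantKernel m (x, y) n ≤ 2 :=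
  tsum_ite_add_ite_le_two (fun _ _ _ _ => by omega) (fun _ _ _ _ => by omega)

lemma tsum_resonantKernel_fst_le (y n : ℕ) : ∑' x, resonantKernel m (x, y) n ≤ 2 :=
  tsum_ite_add_ite_le_two (fun _ _ _ _ => by omega) (fun _ _ _ _ => by omega)

variable {m}

lemma le_of_resonantKernel_ne_zero {p : ℕ × ℕ} {n : ℕ} (h : resonantKernel m p n ≠ 0) :
    n ≤ p.1 + p.2 + m := by
  by_contra hlt
  exact h (by rw [resonantKernel, if_neg (by omega), if_neg (by omega), add_zero])

end ResonantKernel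

section Trilinear

variable {𝕜 : Type*} [NormedField 𝕜] {P : Prop} [Decidable P] {α : 𝕜}

lemma enorm_ite_mul_mul_sub_le (hα : P → ‖α‖ₑ ≤ 1) (x₁ x₂ y₁ y₂ : 𝕜) :
    ‖(if P then α * x₁ * x₂ else 0) - if P then α * y₁ * y₂ else 0‖ₑ ≤
      (if P then 1 else 0) * (‖x₁ - y₁‖ₑ * ‖x₂‖ₑ + ‖y₁‖ₑ * ‖x₂ - y₂‖ₑ) := by
  split_ifs with hP
  · calc ‖α * x₁ * x₂ - α * y₁ * y₂‖ₑ = ‖α‖ₑ * ‖(x₁ - y₁) * x₂ + y₁ * (x₂ - y₂)‖ₑ := by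
          rw [← enorm_mul]
          ring_nf
      _ ≤ 1 * (‖(x₁ - y₁) * x₂‖ₑ + ‖y₁ * (x₂ - y₂)‖ₑ) := by
          gcongr
          exacts [hα hP, enorm_add_le _ _]
      _ = _ := by simp only [enorm_mul]
  · simp

lemma enorm_ite_mul_mul_le (hα : P → ‖α‖ₑ ≤ 1) (x₁ x₂ : 𝕜) :
    ‖if P then α * x₁ * x₂ else 0‖ₑ ≤ ‖x₁‖ₑ * ‖x₂‖ₑ := by
  split_ifs with hP
  · calc ‖α * x₁ * x₂‖ₑ ≤ 1 * ‖x₁‖ₑ * ‖x₂‖ₑ := by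
          simp only [enorm_mul]
          gcongr
          exact hα hP
      _ = _ := by rw [one_mul]
  · simp

lemma summable_ite_mul_mul {P : ℕ × ℕ → Prop} [DecidablePred P] {α : ℕ × ℕ → ℂ}
    (hα : ∀ p, P p → ‖α p‖ₑ ≤ 1) {x y : ℕ → ℂ} (hx : ∑' k, ‖x k‖ₑ ≠ ⊤)
    (hy : ∑' k, ‖y k‖ₑ ≠ ⊤) : Summable fun p => if P p then α p * x p.1 * y p.2 else 0 := by
  refine Summable.of_enorm (ne_top_of_le_ne_top (b := ∑' p : ℕ × ℕ, ‖x p.1‖ₑ * ‖y p.2‖ₑ) ?_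
    (ENNReal.tsum_le_tsum fun p => enorm_ite_mul_mul_le (hα p) _ _))
  rw [← ENNReal.tsum_mul_tsum (fun k => ‖x k‖ₑ) fun k => ‖y k‖ₑ]
  exact ENNReal.mul_ne_top hx hy

end Trilinear

section VectorField

variable {m : ℕ} {a : ℕ → ℕ → ℕ → ℂ}

noncomputable def Xa₁ (m : ℕ) (a : ℕ → ℕ → ℕ → ℂ) (u : ℕ → ℂ) (n : ℕ) (p : ℕ × ℕ) : ℂ :=
  if p.1 + n = p.2 + m then conj (a p.1 p.2 n) * conj (u p.1) * u p.2 else 0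

noncomputable def Xa₂ (m : ℕ) (a : ℕ → ℕ → ℕ → ℂ) (u : ℕ → ℂ) (n : ℕ) (p : ℕ × ℕ) : ℂ :=
  if p.1 + p.2 = m + n then a p.1 n p.2 * u p.1 * u p.2 else 0

lemma Xa_apply (u : ℕ → ℂ) (n : ℕ) :
    Xa m a u n = -2 * Complex.I * ∑' p, Xa₁ m a u n p - Complex.I * ∑' p, Xa₂ m a u n p :=
  rfl

lemma Xa_zero : Xa m a 0 = 0 := by
  ext n
  simp [Xa]

lemma summable_Xa₁ (ha : ∀ j l k, j + k = l + m → ‖a j l k‖ₑ ≤ 1) {u : ℕ → ℂ}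
    (hu : ∑' k, ‖u k‖ₑ ≠ ⊤) (n : ℕ) : Summable (Xa₁ m a u n) :=
  summable_ite_mul_mul (fun p hp => by simpa using ha _ _ _ hp) (x := fun k => conj (u k))
    (by simpa using hu) hu

lemma summable_Xa₂ (ha : ∀ j l k, j + k = l + m → ‖a j l k‖ₑ ≤ 1) {u : ℕ → ℂ}
    (hu : ∑' k, ‖u k‖ₑ ≠ ⊤) (n : ℕ) : Summable (Xa₂ m a u n) :=
  summable_ite_mul_mul (fun p hp => ha _ _ _ (by omega)) hu hu

lemma enorm_Xa₁_sub_add_enorm_Xa₂_sub_le (ha : ∀ j l k, j + k = l + m → ‖a j l k‖ₑ ≤ 1)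
    (u v : ℕ → ℂ) (n : ℕ) (p : ℕ × ℕ) :
    ‖Xa₁ m a u n p - Xa₁ m a v n p‖ₑ + ‖Xa₂ m a u n p - Xa₂ m a v n p‖ₑ ≤
      resonantKernel m p n * (‖u p.1 - v p.1‖ₑ * ‖u p.2‖ₑ + ‖v p.1‖ₑ * ‖u p.2 - v p.2‖ₑ) := by
  rw [resonantKernel, add_mul]
  refine add_le_add ?_ (enorm_ite_mul_mul_sub_le (fun hp => ha _ _ _ (by omega)) _ _ _ _)
  have := enorm_ite_mul_mul_sub_le (P := p.1 + n = p.2 + m) (α := conj (a p.1 p.2 n))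
    (fun hp => by simpa using ha _ _ _ hp)
    (conj (u p.1)) (u p.2) (conj (v p.1)) (v p.2)
  rwa [← map_sub, RCLike.enorm_conj, RCLike.enorm_conj] at this

lemma enorm_Xa_sub_le (ha : ∀ j l k, j + k = l + m → ‖a j l k‖ₑ ≤ 1)
    {u v : ℕ → ℂ} (hu : ∑' k, ‖u k‖ₑ ≠ ⊤) (hv : ∑' k, ‖v k‖ₑ ≠ ⊤) (n : ℕ) :
    ‖Xa m a u n - Xa m a v n‖ₑ ≤
      2 * (kernelBilin (resonantKernel m) (fun k => ‖u k - v k‖ₑ) (fun k => ‖u k‖ₑ) n +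
        kernelBilin (resonantKernel m) (fun k => ‖v k‖ₑ) (fun k => ‖u k - v k‖ₑ) n) := by
  have hdiff : Xa m a u n - Xa m a v n =
      -2 * Complex.I * ∑' p, (Xa₁ m a u n p - Xa₁ m a v n p) -
        Complex.I * ∑' p, (Xa₂ m a u n p - Xa₂ m a v n p) := by
    rw [Xa_apply, Xa_apply, (summable_Xa₁ ha hu n).tsum_sub (summable_Xa₁ ha hv n),
      (summable_Xa₂ ha hu n).tsum_sub (summable_Xa₂ ha hv n)]
    ring
  calc ‖Xa m a u n - Xa m a v n‖ₑ
      ≤ 2 * ∑' p, ‖Xa₁ m a u n p - Xa₁ m a v n p‖ₑ + ∑' p, ‖Xa₂ m a u n p - Xa₂ m a v n p‖ₑ := by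
        rw [hdiff]
        have h2 : ‖(-2 : ℂ)‖ₑ = 2 := by rw [← ofReal_norm]; norm_num
        have hI : ‖Complex.I‖ₑ = 1 := by rw [← ofReal_norm]; norm_num
        refine enorm_sub_le.trans ?_
        simp only [enorm_mul, h2, hI, mul_one, one_mul]
        gcongr <;> exact enorm_tsum_le_tsum_enorm
    _ ≤ 2 * ∑' p, (‖Xa₁ m a u n p - Xa₁ m a v n p‖ₑ + ‖Xa₂ m a u n p - Xa₂ m a v n p‖ₑ) := by
        rw [ENNReal.tsum_add, mul_add]
        gcongr
        exact le_mul_of_one_le_left' one_le_two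
    _ ≤ 2 * ∑' p, resonantKernel m p n *
          (‖u p.1 - v p.1‖ₑ * ‖u p.2‖ₑ + ‖v p.1‖ₑ * ‖u p.2 - v p.2‖ₑ) := by
        gcongr with p
        exact enorm_Xa₁_sub_add_enorm_Xa₂_sub_le ha u v n p
    _ = _ := by simp only [kernelBilin, ← ENNReal.tsum_add, mul_add]

end VectorField

theorem hsENormSq_Xa_sub_le {m : ℕ} {a : ℕ → ℕ → ℕ → ℂ}
    (ha : ∀ j l k, j + k = l + m → ‖a j l k‖ₑ ≤ 1) {s : ℝ} (hs : 1 / 2 < s) :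
    ∃ C : ℝ≥0∞, C ≠ ⊤ ∧ ∀ u v : ℕ → ℂ, InHs s u → InHs s v →
      hsENormSq s (Xa m a u - Xa m a v) ≤
        C * (hsENormSq s u + hsENormSq s v) * hsENormSq s (u - v) := by
  set K := ENNReal.ofReal ((8 + 2 * (m : ℝ) ^ 2) ^ (s / 2))
  set C := 4 * K ^ 2 * 2 ^ 2 * ∑' k, (hsWeight s k)⁻¹ ^ 2
  have hC : C ≠ ⊤ := by
    have := tsum_inv_hsWeight_sq_ne_top hs
    finiteness
  have hbilin := tsum_sq_weight_mul_kernelBilin_le (hsWeight_ne_zero s) (hsWeight_ne_top s)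
    (resonantKernel m)
    (fun p n h => hsWeight_le_mul_add (by linarith) (le_of_resonantKernel_ne_zero h))
    (tsum_resonantKernel_le m) (tsum_resonantKernel_snd_le m) (tsum_resonantKernel_fst_le m)
  refine ⟨8 * C, by finiteness, fun u v hu hv => ?_⟩
  set B₁ := kernelBilin (resonantKernel m) (fun k => ‖u k - v k‖ₑ) (fun k => ‖u k‖ₑ)
  set B₂ := kernelBilin (resonantKernel m) (fun k => ‖v k‖ₑ) (fun k => ‖u k - v k‖ₑ)
  have hpt := enorm_Xa_sub_le ha (tsum_enorm_ne_top_of_inHs hs hu) (tsum_enorm_ne_top_of_inHs hs hv)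
  calc hsENormSq s (Xa m a u - Xa m a v)
      ≤ ∑' n, (hsWeight s n * (2 * (B₁ n + B₂ n))) ^ 2 :=
        ENNReal.tsum_le_tsum fun n => by gcongr; exact hpt n
    _ = 4 * ∑' n, (hsWeight s n * B₁ n + hsWeight s n * B₂ n) ^ 2 := by
        rw [← ENNReal.tsum_mul_left]
        exact tsum_congr fun n => by ring
    _ ≤ 4 * ∑' n, 2 * ((hsWeight s n * B₁ n) ^ 2 + (hsWeight s n * B₂ n) ^ 2) := by
        gcongr with n
        exact ENNReal.add_sq_le _ _
    _ = 8 * (∑' n, (hsWeight s n * B₁ n) ^ 2 + ∑' n, (hsWeight s n * B₂ n) ^ 2) := by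
        rw [ENNReal.tsum_mul_left, ENNReal.tsum_add]
        ring
    _ ≤ 8 * (C * hsENormSq s (u - v) * hsENormSq s u +
          C * hsENormSq s v * hsENormSq s (u - v)) := by
        gcongr
        exacts [hbilin _ _, hbilin _ _]
    _ = 8 * C * (hsENormSq s u + hsENormSq s v) * hsENormSq s (u - v) := by ring

theorem statement16_general (m : ℕ) (a : ℕ → ℕ → ℕ → ℂ)
    (hbd : ∀ j l k : ℕ, j + k = l + m → ‖a j l k‖ ≤ 1 / 2)
    (s : ℝ) (hs : 1 / 2 < s) :
    ∃ C : ℝ, 0 < C ∧ ∀ v h : ℕ → ℂ, InHs s v → InHs s h →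
      (InHs s (Xa m a v) ∧ hsNorm s (Xa m a v) ≤ C * hsNorm s v ^ 2) ∧
      hsNorm s (fun n => Xa m a v n - Xa m a h n) ≤
        C * (hsNorm s v + hsNorm s h) * hsNorm s (fun n => v n - h n) := by
  have ha : ∀ j l k, j + k = l + m → ‖a j l k‖ₑ ≤ 1 := fun j l k h => by
    rw [← ofReal_norm]
    exact ENNReal.ofReal_le_one.2 ((hbd j l k h).trans (by norm_num))
  obtain ⟨C, hC, hX⟩ := hsENormSq_Xa_sub_le ha hs
  have hLip : ∀ v h, InHs s v → InHs s h → InHs s (Xa m a v - Xa m a h) ∧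
      hsNorm s (Xa m a v - Xa m a h) ≤
        (√C.toReal + 1) * (hsNorm s v + hsNorm s h) * hsNorm s (v - h) := by
    intro v h hv hh
    obtain ⟨hin, hle⟩ := inHs_and_hsNorm_le_of_hsENormSq_le hC hv hh (hv.sub hh) (hX v h hv hh)
    refine ⟨hin, hle.trans ?_⟩
    have := hsNorm_nonneg s v; have := hsNorm_nonneg s h; have := hsNorm_nonneg s (v - h)
    gcongr
    linarith
  refine ⟨√C.toReal + 1, by positivity, fun v h hv hh => ⟨?_, (hLip v h hv hh).2⟩⟩
  obtain ⟨hin, hle⟩ := hLip v 0 hv (inHs_zero s)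
  simp only [Xa_zero, sub_zero, hsNorm_zero, add_zero] at hin hle
  exact ⟨hin, hle.trans_eq (by ring)⟩

/-- Quadratic bound and Lipschitz estimate in `H^s₊`, `s > 1/2`, for the
Hamiltonian vector field of a cubic functional with symmetric coefficients
bounded by `1/2`. -/
theorem statement16 (m : ℕ) (a : ℕ → ℕ → ℕ → ℂ)
    (hsym : ∀ j l k : ℕ, j + k = l + m → a j l k = a k l j)
    (hbd : ∀ j l k : ℕ, j + k = l + m → ‖a j l k‖ ≤ 1 / 2)
    (s : ℝ) (hs : 1 / 2 < s) :
    ∃ C : ℝ, 0 < C ∧ ∀ v h : ℕ → ℂ, InHs s v → InHs s h →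
      (InHs s (Xa m a v) ∧ hsNorm s (Xa m a v) ≤ C * hsNorm s v ^ 2) ∧
      hsNorm s (fun n => Xa m a v n - Xa m a h n) ≤
        C * (hsNorm s v + hsNorm s h) * hsNorm s (fun n => v n - h n) :=
  statement16_general m a hbd s hs
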